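/- Let Λ₁, Λ₂, D, K, M be symmetric positive definite real n×n matrices, and y₁, y₂ : [0,∞) → ℝⁿ C² curves satisfying Λᵢ·yᵢ'' + D·yᵢ' + K·yᵢ = F with F = −M·(y₁'' + y₂''). Then ∫₀^∞ (‖y₁'(t)‖² + ‖y₂'(t)‖²) dt ≤ S_tot(0)/λ_min(D), where S_tot(0) = Σᵢ [½·yᵢ'(0)ᵀΛᵢ·yᵢ'(0) + ½·yᵢ(0)ᵀK·yᵢ(0)] + ½·(y₁'(0) + y₂'(0))ᵀM·(y₁'(0) + y₂'(0)). In particular the velocities y₁', y₂' are square-integrable on [0,∞). (Integral step in the proof of the paper's Theorem 3.) -/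

import Mathlib

/-!
The storage function `S_tot` (kinetic energies of the two manipulators and of the object plus
the elastic energies of the impedances) is nonnegative and, along solutions, satisfies
`S_tot' = -(y₁'ᵀ D y₁' + y₂'ᵀ D y₂')`: the interaction force enters the two manipulators and the
object with opposite signs, so its power cancels. Integrating over `[0, T]` bounds the
dissipated energy by `S_tot(0)`, and `λ_min(D) ‖v‖² ≤ vᵀ D v` turns this into the bound on the
velocities.
-/

open Matrix Filter Topology MeasureTheory

/-- The minimum eigenvalue of a Hermitian (here: real symmetric) matrix. -/
noncomputable def lamMin {n : ℕ} {D : Matrix (Fin n) (Fin n) ℝ}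
    (hD : D.IsHermitian) : ℝ := ⨅ i, hD.eigenvalues i

open Set
open scoped MatrixOrder

namespace Matrix

variable {n : Type*} [Fintype n]

lemma IsHermitian.dotProduct_mulVec_comm {A : Matrix n n ℝ} (hA : A.IsHermitian)
    (x y : n → ℝ) : x ⬝ᵥ (A *ᵥ y) = y ⬝ᵥ (A *ᵥ x) := by
  rw [dotProduct_mulVec, ← mulVec_transpose, dotProduct_comm, show Aᵀ = A from hA]

/-- The eigenvalue bound says `c • 1 ≤ A` in the Loewner order. -/
lemma IsHermitian.mul_dotProduct_self_le [DecidableEq n] {A : Matrix n n ℝ}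
    (hA : A.IsHermitian) {c : ℝ} (hc : ∀ i, c ≤ hA.eigenvalues i) (x : n → ℝ) :
    c * (x ⬝ᵥ x) ≤ x ⬝ᵥ (A *ᵥ x) := by
  have hcA : algebraMap ℝ _ c ≤ A := by
    rw [algebraMap_le_iff_le_spectrum (a := A) hA.isSelfAdjoint,
      hA.spectrum_real_eq_range_eigenvalues]
    rintro _ ⟨i, rfl⟩
    exact hc i
  simpa only [Algebra.algebraMap_eq_smul_one, sub_mulVec, smul_mulVec, one_mulVec,
    dotProduct_sub, dotProduct_smul, smul_eq_mul, star_trivial, sub_nonneg]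
    using (le_iff.mp hcA).dotProduct_mulVec_nonneg x

end Matrix

lemma lamMin_mul_dotProduct_self_le {n : ℕ} {A : Matrix (Fin n) (Fin n) ℝ}
    (hA : A.IsHermitian) (x : Fin n → ℝ) : lamMin hA * (x ⬝ᵥ x) ≤ x ⬝ᵥ (A *ᵥ x) :=
  hA.mul_dotProduct_self_le (fun i => ciInf_le (finite_range _).bddBelow i) x

lemma lamMin_pos {n : ℕ} [NeZero n] {A : Matrix (Fin n) (Fin n) ℝ} (hA : A.PosDef) :
    0 < lamMin hA.isHermitian := by
  obtain ⟨i, hi⟩ := exists_eq_ciInf_of_finite (f := hA.isHermitian.eigenvalues)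
  rw [lamMin, ← hi]
  exact hA.eigenvalues_pos i

section Derivatives

variable {n : Type*} [Fintype n] {f g : ℝ → n → ℝ} {f' g' : n → ℝ} {t : ℝ}

theorem HasDerivAt.dotProduct (hf : HasDerivAt f f' t) (hg : HasDerivAt g g' t) :
    HasDerivAt (fun t => f t ⬝ᵥ g t) (f' ⬝ᵥ g t + f t ⬝ᵥ g') t := by
  simp only [_root_.dotProduct, ← Finset.sum_add_distrib]
  exact HasDerivAt.fun_sum fun i _ => (hasDerivAt_pi.1 hf i).mul (hasDerivAt_pi.1 hg i)

theorem HasDerivAt.matrix_mulVec (A : Matrix n n ℝ) (hg : HasDerivAt g g' t) :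
    HasDerivAt (fun t => A *ᵥ g t) (A *ᵥ g') t :=
  hasDerivAt_pi.2 fun i => by
    simp only [mulVec, _root_.dotProduct]
    exact HasDerivAt.fun_sum fun j _ => (hasDerivAt_pi.1 hg j).const_mul (A i j)

theorem HasDerivAt.half_dotProduct_mulVec {A : Matrix n n ℝ} (hA : A.IsHermitian)
    (hg : HasDerivAt g g' t) :
    HasDerivAt (fun t => 1 / 2 * (g t ⬝ᵥ (A *ᵥ g t))) (g t ⬝ᵥ (A *ᵥ g')) t := by
  refine ((hg.dotProduct (hg.matrix_mulVec A)).const_mul (1 / 2 : ℝ)).congr_deriv ?_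
  rw [hA.dotProduct_mulVec_comm g']
  ring

end Derivatives

section Storage

variable {n : Type*} [Fintype n] (Λ₁ Λ₂ K M : Matrix n n ℝ)

/-- The paper's `S_tot`, in terms of the positions `xᵢ` and velocities `vᵢ` of the two
manipulators; the object moves with velocity `-(v₁ + v₂)`. -/
noncomputable def storageFunction (x₁ v₁ x₂ v₂ : n → ℝ) : ℝ :=
  ((1 / 2) * (v₁ ⬝ᵥ (Λ₁ *ᵥ v₁)) + (1 / 2) * (x₁ ⬝ᵥ (K *ᵥ x₁)))
    + ((1 / 2) * (v₂ ⬝ᵥ (Λ₂ *ᵥ v₂)) + (1 / 2) * (x₂ ⬝ᵥ (K *ᵥ x₂)))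
    + (1 / 2) * ((v₁ + v₂) ⬝ᵥ (M *ᵥ (v₁ + v₂)))

variable {Λ₁ Λ₂ K M}

lemma storageFunction_nonneg (hΛ₁ : Λ₁.PosSemidef) (hΛ₂ : Λ₂.PosSemidef) (hK : K.PosSemidef)
    (hM : M.PosSemidef) (x₁ v₁ x₂ v₂ : n → ℝ) :
    0 ≤ storageFunction Λ₁ Λ₂ K M x₁ v₁ x₂ v₂ := by
  have := hΛ₁.dotProduct_mulVec_nonneg v₁
  have := hΛ₂.dotProduct_mulVec_nonneg v₂
  have := hK.dotProduct_mulVec_nonneg x₁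
  have := hK.dotProduct_mulVec_nonneg x₂
  have := hM.dotProduct_mulVec_nonneg (v₁ + v₂)
  simp only [star_trivial] at *
  unfold storageFunction
  positivity

lemma hasDerivAt_storageFunction (hΛ₁ : Λ₁.IsHermitian) (hΛ₂ : Λ₂.IsHermitian)
    (hK : K.IsHermitian) (hM : M.IsHermitian) {x₁ v₁ x₂ v₂ : ℝ → n → ℝ} {a₁ a₂ : n → ℝ} {t : ℝ}
    (hx₁ : HasDerivAt x₁ (v₁ t) t) (hv₁ : HasDerivAt v₁ a₁ t)
    (hx₂ : HasDerivAt x₂ (v₂ t) t) (hv₂ : HasDerivAt v₂ a₂ t) :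
    HasDerivAt (fun t => storageFunction Λ₁ Λ₂ K M (x₁ t) (v₁ t) (x₂ t) (v₂ t))
      (v₁ t ⬝ᵥ (Λ₁ *ᵥ a₁ + K *ᵥ x₁ t) + v₂ t ⬝ᵥ (Λ₂ *ᵥ a₂ + K *ᵥ x₂ t)
        + (v₁ t + v₂ t) ⬝ᵥ (M *ᵥ (a₁ + a₂))) t := by
  refine (((hv₁.half_dotProduct_mulVec hΛ₁).add (hx₁.half_dotProduct_mulVec hK)).add
    ((hv₂.half_dotProduct_mulVec hΛ₂).add (hx₂.half_dotProduct_mulVec hK)) |>.add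
    ((hv₁.add hv₂).half_dotProduct_mulVec hM)).congr_deriv ?_
  rw [hK.dotProduct_mulVec_comm (x₁ t), hK.dotProduct_mulVec_comm (x₂ t)]
  simp only [Pi.add_apply, mulVec_add, dotProduct_add]

lemma storage_power_eq_neg_dissipation (D : Matrix n n ℝ) {x₁ v₁ a₁ x₂ v₂ a₂ F : n → ℝ}
    (h₁ : Λ₁ *ᵥ a₁ + D *ᵥ v₁ + K *ᵥ x₁ = F) (h₂ : Λ₂ *ᵥ a₂ + D *ᵥ v₂ + K *ᵥ x₂ = F)
    (hF : F = -(M *ᵥ (a₁ + a₂))) :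
    v₁ ⬝ᵥ (Λ₁ *ᵥ a₁ + K *ᵥ x₁) + v₂ ⬝ᵥ (Λ₂ *ᵥ a₂ + K *ᵥ x₂)
        + (v₁ + v₂) ⬝ᵥ (M *ᵥ (a₁ + a₂))
      = -(v₁ ⬝ᵥ (D *ᵥ v₁) + v₂ ⬝ᵥ (D *ᵥ v₂)) := by
  rw [show Λ₁ *ᵥ a₁ + K *ᵥ x₁ = F - D *ᵥ v₁ by rw [← h₁]; abel,
    show Λ₂ *ᵥ a₂ + K *ᵥ x₂ = F - D *ᵥ v₂ by rw [← h₂]; abel,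
    show M *ᵥ (a₁ + a₂) = -F by rw [hF, neg_neg]]
  simp only [dotProduct_sub, dotProduct_neg, add_dotProduct]
  ring

end Storage

theorem integrableOn_Ici_and_integral_le_of_hasDerivAt_neg {S g : ℝ → ℝ} {a : ℝ}
    (hS : ∀ t, a ≤ t → HasDerivAt S (-g t) t) (hS0 : ∀ t, a ≤ t → 0 ≤ S t)
    (hg : ContinuousOn g (Ici a)) (hg0 : ∀ t, a ≤ t → 0 ≤ g t) :
    IntegrableOn g (Ici a) ∧ ∫ t in Ici a, g t ≤ S a := by
  have mem_Ici : ∀ {T t}, a ≤ T → t ∈ uIcc a T → a ≤ t := fun hT ht => (uIcc_of_le hT ▸ ht).1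
  have hgT : ∀ T, a ≤ T → ∫ t in a..T, g t ≤ S a := by
    intro T hT
    have hFTC := intervalIntegral.integral_eq_sub_of_hasDerivAt
      (fun t ht => hS t (mem_Ici hT ht))
      ((hg.mono (by rw [uIcc_of_le hT]; exact Icc_subset_Ici_self)).intervalIntegrable.neg)
    rw [intervalIntegral.integral_neg] at hFTC
    linarith [hS0 T hT]
  have hIoi : IntegrableOn g (Ioi a) := by
    refine integrableOn_Ioi_of_intervalIntegral_norm_bounded (S a) a
      (fun T => ((hg.mono Icc_subset_Ici_self).integrableOn_Icc).mono_set Ioc_subset_Icc_self)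
      tendsto_id ?_
    filter_upwards [eventually_ge_atTop a] with T hT
    exact (intervalIntegral.integral_congr fun t ht =>
      Real.norm_of_nonneg (hg0 t (mem_Ici hT ht))).trans_le (hgT T hT)
  refine ⟨(integrableOn_Ici_iff_integrableOn_Ioi).2 hIoi, ?_⟩
  rw [integral_Ici_eq_integral_Ioi]
  exact le_of_tendsto (intervalIntegral_tendsto_integral_Ioi a hIoi tendsto_id)
    ((eventually_ge_atTop a).mono hgT)

theorem integrableOn_and_setIntegral_le_div_of_mul_le {α : Type*} [MeasurableSpace α]
    {μ : Measure α} {s : Set α} {f g : α → ℝ} {c : ℝ} (hs : MeasurableSet s) (hc : 0 < c)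
    (hf : AEStronglyMeasurable f (μ.restrict s)) (hf0 : ∀ x ∈ s, 0 ≤ f x)
    (hfg : ∀ x ∈ s, c * f x ≤ g x) (hg : IntegrableOn g s μ) :
    IntegrableOn f s μ ∧ ∫ x in s, f x ∂μ ≤ (∫ x in s, g x ∂μ) / c := by
  have hle : ∀ x ∈ s, f x ≤ g x / c := fun x hx => (le_div_iff₀' hc).2 (hfg x hx)
  have hfi : IntegrableOn f s μ := (hg.div_const c).mono' hf <|
    ae_restrict_of_forall_mem hs fun x hx => by rw [Real.norm_of_nonneg (hf0 x hx)]; exact hle x hx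
  refine ⟨hfi, ?_⟩
  rw [← integral_div]
  exact setIntegral_mono_on hfi (hg.div_const c) hs hle

/-- Integral step in the proof of Theorem 3.  The velocities of the
two AMs are square-integrable on `[0,∞)` with
`∫₀^∞ (‖y₁'‖² + ‖y₂'‖²) dt ≤ S_tot(0) / λ_min(D)`. -/
theorem stmt_8 {n : ℕ} (Λ₁ Λ₂ D K M : Matrix (Fin n) (Fin n) ℝ)
    (hΛ₁ : Λ₁.PosDef) (hΛ₂ : Λ₂.PosDef) (hD : D.PosDef) (hK : K.PosDef)
    (hM : M.PosDef)
    (y₁ y₂ : ℝ → Fin n → ℝ) (hy₁ : ContDiff ℝ 2 y₁) (hy₂ : ContDiff ℝ 2 y₂)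
    (F : ℝ → Fin n → ℝ)
    (hF : ∀ t : ℝ, F t = -(M *ᵥ (deriv (deriv y₁) t + deriv (deriv y₂) t)))
    (hODE₁ : ∀ t : ℝ, 0 ≤ t →
      Λ₁ *ᵥ (deriv (deriv y₁) t) + D *ᵥ (deriv y₁ t) + K *ᵥ (y₁ t) = F t)
    (hODE₂ : ∀ t : ℝ, 0 ≤ t →
      Λ₂ *ᵥ (deriv (deriv y₂) t) + D *ᵥ (deriv y₂ t) + K *ᵥ (y₂ t) = F t) :
    IntegrableOn (fun t => deriv y₁ t ⬝ᵥ deriv y₁ t + deriv y₂ t ⬝ᵥ deriv y₂ t)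
        (Set.Ici (0:ℝ)) ∧
    (∫ t in Set.Ici (0:ℝ), (deriv y₁ t ⬝ᵥ deriv y₁ t + deriv y₂ t ⬝ᵥ deriv y₂ t))
      ≤ (((1 / 2) * (deriv y₁ 0 ⬝ᵥ (Λ₁ *ᵥ deriv y₁ 0))
            + (1 / 2) * (y₁ 0 ⬝ᵥ (K *ᵥ y₁ 0)))
          + ((1 / 2) * (deriv y₂ 0 ⬝ᵥ (Λ₂ *ᵥ deriv y₂ 0))
            + (1 / 2) * (y₂ 0 ⬝ᵥ (K *ᵥ y₂ 0)))
          + (1 / 2) * ((deriv y₁ 0 + deriv y₂ 0) ⬝ᵥ (M *ᵥ (deriv y₁ 0 + deriv y₂ 0))))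
        / lamMin hD.isHermitian := by
  rcases Nat.eq_zero_or_pos n with rfl | hn
  · simp [dotProduct_of_isEmpty]
  have : NeZero n := .of_pos hn
  have hv₁ := hy₁.differentiable_deriv_two
  have hv₂ := hy₂.differentiable_deriv_two
  have hc₁ := hv₁.continuous
  have hc₂ := hv₂.continuous
  have hS : ∀ t, 0 ≤ t → HasDerivAt
      (fun t => storageFunction Λ₁ Λ₂ K M (y₁ t) (deriv y₁ t) (y₂ t) (deriv y₂ t))
      (-(deriv y₁ t ⬝ᵥ (D *ᵥ deriv y₁ t) + deriv y₂ t ⬝ᵥ (D *ᵥ deriv y₂ t))) t := fun t ht => by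
    rw [← storage_power_eq_neg_dissipation D (hODE₁ t ht) (hODE₂ t ht) (hF t)]
    exact hasDerivAt_storageFunction hΛ₁.isHermitian hΛ₂.isHermitian hK.isHermitian
      hM.isHermitian (hy₁.differentiable two_ne_zero t).hasDerivAt (hv₁ t).hasDerivAt
      (hy₂.differentiable two_ne_zero t).hasDerivAt (hv₂ t).hasDerivAt
  obtain ⟨hdiss, hdiss_le⟩ := integrableOn_Ici_and_integral_le_of_hasDerivAt_neg hS
    (fun t _ => storageFunction_nonneg hΛ₁.posSemidef hΛ₂.posSemidef hK.posSemidef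
      hM.posSemidef _ _ _ _)
    (by fun_prop : Continuous _).continuousOn
    (fun t _ => add_nonneg (hD.posSemidef.dotProduct_mulVec_nonneg _)
      (hD.posSemidef.dotProduct_mulVec_nonneg _))
  obtain ⟨hint, hint_le⟩ := integrableOn_and_setIntegral_le_div_of_mul_le
    (f := fun t => deriv y₁ t ⬝ᵥ deriv y₁ t + deriv y₂ t ⬝ᵥ deriv y₂ t) measurableSet_Ici
    (lamMin_pos hD) (by fun_prop : Continuous _).aestronglyMeasurable
    (fun t _ => add_nonneg (dotProduct_self_star_nonneg _) (dotProduct_self_star_nonneg _))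
    (fun t _ => mul_add (lamMin hD.isHermitian) _ _ ▸ add_le_add
      (lamMin_mul_dotProduct_self_le _ _) (lamMin_mul_dotProduct_self_le _ _))
    hdiss
  exact ⟨hint, hint_le.trans (div_le_div_of_nonneg_right hdiss_le (lamMin_pos hD).le)⟩
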